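/- Let β ∈ ℝ, γ > 0, and let μ, ν be compactly supported probability measures on ℝ with infinite support such that μ = Φ_{β,γ}[ν]. Then for every n ≥ 1, the monic orthogonal polynomials of μ satisfy L_ν[ L_μ[P^μ_n] ] − γ^{−1} (x − β) L_μ[P^μ_n] = −γ^{−1} P^μ_n. -/

import Mathlib

open MeasureTheory Polynomial

/-- Moments of a measure on ℝ. -/
noncomputable def mom (ρ : Measure ℝ) (k : ℕ) : ℝ := ∫ x, x ^ k ∂ρ

/-- The operator `L_ρ` on polynomials, defined via the moment sequence `m` of `ρ`:
`L[x^n] = Σ_{k=0}^{n-1} m_{n-1-k} x^k`. -/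
noncomputable def Lop (m : ℕ → ℝ) (f : Polynomial ℝ) : Polynomial ℝ :=
  f.sum fun n a => C a * ∑ k ∈ Finset.range n, C (m (n - 1 - k)) * X ^ k

/-- A measure has compact support. -/
def CompactSupp (μ : Measure ℝ) : Prop := ∃ K : Set ℝ, IsCompact K ∧ μ Kᶜ = 0

/-- The (topological) support of a measure on ℝ. -/
def msupport (μ : Measure ℝ) : Set ℝ := {x | ∀ U ∈ nhds x, μ U ≠ 0}

/-- `JacobiShift β γ mν mμ` says (at the level of moment sequences) that `μ = Φ_{β,γ}[ν]`. -/
def JacobiShift (β γ : ℝ) (mν mμ : ℕ → ℝ) : Prop :=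
  ∀ n : ℕ, 1 ≤ n →
    mμ n = β * mμ (n - 1) + γ * ∑ i ∈ Finset.range (n - 1), mν i * mμ (n - 2 - i)

/-- `P` is the family of monic orthogonal polynomials of `ρ`. -/
def IsMonicOPS (ρ : Measure ℝ) (P : ℕ → Polynomial ℝ) : Prop :=
  (∀ n, (P n).Monic) ∧ (∀ n, (P n).natDegree = n) ∧
  ∀ n m : ℕ, n ≠ m → ∫ x, (P n).eval x * (P m).eval x ∂ρ = 0

/-! The moment recursion defining `μ = Φ_{β,γ}[ν]` says precisely that the linear functionals
`f ↦ γ ∫ L_μ[f] dν` and `f ↦ ∫ (x - β) f dμ` agree on monomials, hence on all polynomials.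
Together with the rule `L_ρ[x f] = x L_ρ[f] + ∫ f dρ`, induction on `f` (constants, sums,
multiplication by `x`) gives `γ L_ν[L_μ[f]] = (x - β) L_μ[f] - f + ∫ f dμ` for every polynomial `f`.
For `f = P_n` with `n ≥ 1` the last term vanishes by orthogonality to `P_0 = 1`. -/

noncomputable def momentFunctional (m : ℕ → ℝ) : ℝ[X] →ₗ[ℝ] ℝ :=
  lsum fun k => m k • LinearMap.id

@[simp]
lemma momentFunctional_monomial (m : ℕ → ℝ) (n : ℕ) (a : ℝ) :
    momentFunctional m (monomial n a) = m n * a := by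
  simp [momentFunctional, sum_monomial_index]

lemma momentFunctional_C_mul (m : ℕ → ℝ) (a : ℝ) (f : ℝ[X]) :
    momentFunctional m (C a * f) = a * momentFunctional m f := by
  rw [← smul_eq_C_mul, map_smul, smul_eq_mul]

lemma Lop_add (m : ℕ → ℝ) (f g : ℝ[X]) : Lop m (f + g) = Lop m f + Lop m g :=
  sum_add_index _ _ _ (fun _ => by simp) fun _ _ _ => by simp [add_mul]

lemma Lop_monomial (m : ℕ → ℝ) (n : ℕ) (a : ℝ) :
    Lop m (monomial n a) = C a * ∑ k ∈ Finset.range n, C (m (n - 1 - k)) * X ^ k := by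
  simp [Lop, sum_monomial_index]

lemma Lop_C (m : ℕ → ℝ) (a : ℝ) : Lop m (C a) = 0 := by
  simp [← monomial_zero_left, Lop_monomial]

lemma Lop_monomial_succ (m : ℕ → ℝ) (n : ℕ) (a : ℝ) :
    Lop m (monomial (n + 1) a) = X * Lop m (monomial n a) + C (m n * a) := by
  simp only [Lop_monomial, Finset.sum_range_succ', Nat.add_sub_cancel, Nat.sub_zero, pow_zero,
    mul_one, mul_add, Finset.mul_sum, C_mul]
  refine congrArg₂ (· + ·) (Finset.sum_congr rfl fun k _ => ?_) (mul_comm _ _)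
  rw [Nat.sub_sub, add_comm 1 k]
  ring

lemma Lop_X_mul (m : ℕ → ℝ) (f : ℝ[X]) :
    Lop m (X * f) = X * Lop m f + C (momentFunctional m f) := by
  induction f using Polynomial.induction_on' with
  | add p q hp hq => rw [mul_add, Lop_add, Lop_add, hp, hq, map_add, C_add]; ring
  | monomial n a => rw [X_mul_monomial, Lop_monomial_succ, momentFunctional_monomial]

lemma momentFunctional_Lop_of_jacobiShift {β γ : ℝ} {mν mμ : ℕ → ℝ}
    (hs : JacobiShift β γ mν mμ) (f : ℝ[X]) :
    γ * momentFunctional mν (Lop mμ f) = momentFunctional mμ ((X - C β) * f) := by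
  induction f using Polynomial.induction_on' with
  | add p q hp hq => rw [Lop_add, map_add, mul_add, hp, hq, mul_add, map_add]
  | monomial n a =>
    have hshift := hs (n + 1) n.succ_pos
    rw [Nat.add_sub_cancel, show n + 1 - 2 = n - 1 by omega] at hshift
    rw [Lop_monomial, sub_mul, X_mul_monomial, C_mul_monomial, map_sub, momentFunctional_monomial,
      momentFunctional_monomial, momentFunctional_C_mul, map_sum]
    simp only [C_mul_X_pow_eq_monomial, momentFunctional_monomial]
    rw [hshift]
    ring

lemma C_mul_Lop_Lop_of_jacobiShift {β γ : ℝ} {mν mμ : ℕ → ℝ} (h0 : mμ 0 = 1)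
    (hs : JacobiShift β γ mν mμ) (f : ℝ[X]) :
    C γ * Lop mν (Lop mμ f) = (X - C β) * Lop mμ f - f + C (momentFunctional mμ f) := by
  induction f using Polynomial.induction_on with
  | C a => simp [Lop, momentFunctional, h0]
  | add p q hp hq => rw [Lop_add, Lop_add, mul_add, hp, hq, map_add, C_add]; ring
  | monomial n a ih =>
    rw [show C a * X ^ (n + 1) = X * (C a * X ^ n) by ring]
    generalize C a * X ^ n = g at ih ⊢
    have hmean : C γ * C (momentFunctional mν (Lop mμ g)) =
        C (momentFunctional mμ (X * g)) - C β * C (momentFunctional mμ g) := by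
      rw [← C_mul, momentFunctional_Lop_of_jacobiShift hs, sub_mul, map_sub,
        momentFunctional_C_mul, C_sub, C_mul]
    rw [Lop_X_mul, Lop_add, Lop_X_mul, Lop_C, add_zero]
    linear_combination X * ih + hmean

lemma CompactSupp.integrable_of_continuous {ρ : Measure ℝ} [IsFiniteMeasureOnCompacts ρ]
    (hρ : CompactSupp ρ) {g : ℝ → ℝ} (hg : Continuous g) : Integrable g ρ := by
  obtain ⟨K, hK, hKc⟩ := hρ
  rw [← Measure.restrict_eq_self_of_ae_mem (ae_iff.mpr hKc)]
  exact hg.continuousOn.integrableOn_compact hK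

lemma momentFunctional_mom (ρ : Measure ℝ) [IsFiniteMeasureOnCompacts ρ] (hρ : CompactSupp ρ)
    (f : ℝ[X]) : momentFunctional (mom ρ) f = ∫ x, f.eval x ∂ρ := by
  induction f using Polynomial.induction_on' with
  | add p q hp hq =>
    simp only [map_add, eval_add, hp, hq]
    rw [integral_add (hρ.integrable_of_continuous p.continuous)
      (hρ.integrable_of_continuous q.continuous)]
  | monomial n a => simp [mom, integral_const_mul, mul_comm]

lemma mom_zero (ρ : Measure ℝ) [IsProbabilityMeasure ρ] : mom ρ 0 = 1 := by
  simp [mom]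

lemma IsMonicOPS.integral_eq_zero {ρ : Measure ℝ} {P : ℕ → ℝ[X]} (hP : IsMonicOPS ρ P) {n : ℕ}
    (hn : n ≠ 0) : ∫ x, (P n).eval x ∂ρ = 0 := by
  have hP0 : P 0 = 1 := eq_one_of_monic_natDegree_zero (hP.1 0) (hP.2.1 0)
  simpa [hP0] using hP.2.2 n 0 hn

theorem stmt14_general (μ ν : Measure ℝ) [IsProbabilityMeasure μ]
    (hcsμ : CompactSupp μ)
    (β : ℝ) (γ : ℝ) (hγ : 0 < γ)
    (hshift : JacobiShift β γ (mom ν) (mom μ))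
    (P : ℕ → Polynomial ℝ) (hP : IsMonicOPS μ P) :
    ∀ n : ℕ, 1 ≤ n →
      Lop (mom ν) (Lop (mom μ) (P n)) - C γ⁻¹ * (X - C β) * Lop (mom μ) (P n)
        = C (-γ⁻¹) * P n := by
  intro n hn
  have hmean : momentFunctional (mom μ) (P n) = 0 := by
    rw [momentFunctional_mom μ hcsμ, hP.integral_eq_zero (by omega)]
  have key := C_mul_Lop_Lop_of_jacobiShift (mom_zero μ) hshift (P n)
  rw [hmean, C_0, add_zero] at key
  have hγinv : C γ⁻¹ * C γ = 1 := by rw [← C_mul, inv_mul_cancel₀ hγ.ne', C_1]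
  rw [C_neg]
  linear_combination C γ⁻¹ * key - Lop (mom ν) (Lop (mom μ) (P n)) * hγinv

theorem stmt14 (μ ν : Measure ℝ) [IsProbabilityMeasure μ] [IsProbabilityMeasure ν]
    (hcsμ : CompactSupp μ) (hcsν : CompactSupp ν)
    (hinfμ : (msupport μ).Infinite) (hinfν : (msupport ν).Infinite)
    (β : ℝ) (γ : ℝ) (hγ : 0 < γ)
    (hshift : JacobiShift β γ (mom ν) (mom μ))
    (P : ℕ → Polynomial ℝ) (hP : IsMonicOPS μ P) :
    ∀ n : ℕ, 1 ≤ n →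
      Lop (mom ν) (Lop (mom μ) (P n)) - C γ⁻¹ * (X - C β) * Lop (mom μ) (P n)
        = C (-γ⁻¹) * P n :=
  stmt14_general μ ν hcsμ β γ hγ hshift P hP
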